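/- arXiv:1104.4721 — 2 statements merged into one kernel-verified Lean document; each statement's English description precedes it below -/
import Mathlib

section
/- For every integer n ≥ 0, ∫₀^∞ xⁿ ln(x+1) e^{-x} dx = ∑_{j=0}^{n} (n!/j!) (-1)^j (∑_{i=0}^{j-1} (-1)^{i+1} i! + δ). -/
/-!
Write `I n = ∫ xⁿ log(x+1) e^{-x}` and `J n = ∫ xⁿ e^{-x} / (x+1)` over `(0, ∞)`.
Integrating `xⁿ e^{-x} log(x+1)` by parts gives `I n = n I (n-1) + J n`;
in particular `J 0 = I 0 = δ`.
Splitting `x^{n+1} / (x+1) = xⁿ - xⁿ / (x+1)` gives `J (n+1) = n! - J n`.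
Unrolling the two recurrences yields the formula.
-/

open MeasureTheory Real Set Filter Finset
open scoped Nat

theorem eq_sum_factorial_div_mul_of_succ {K : Type*} [Field K] [CharZero K] {a b : ℕ → K}
    (h0 : a 0 = b 0)
    (hsucc : ∀ n, a (n + 1) = (n + 1) * a n + b (n + 1)) (n : ℕ) :
    a n = ∑ j ∈ range (n + 1), ((n ! : K) / j !) * b j := by
  induction n with
  | zero => simp [h0]
  | succ n ih =>
    rw [hsucc, ih, sum_range_succ _ (n + 1), mul_sum,
      div_self (by exact_mod_cast (n + 1).factorial_ne_zero), one_mul]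
    congr 1
    refine sum_congr rfl fun j _ => ?_
    push_cast [Nat.factorial_succ]
    ring

theorem eq_neg_one_pow_mul_of_succ {R : Type*} [CommRing R] {b c : ℕ → R}
    (hsucc : ∀ n, b (n + 1) = c n - b n) (n : ℕ) :
    b n = (-1) ^ n * (∑ i ∈ range n, (-1) ^ (i + 1) * c i + b 0) := by
  induction n with
  | zero => simp
  | succ n ih =>
    rw [hsucc, ih, sum_range_succ]
    have hsq : ((-1 : R) ^ n) ^ 2 = 1 := by rw [← pow_mul, pow_mul', neg_one_sq, one_pow]
    linear_combination (-c n) * hsq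

theorem integrableOn_pow_mul_exp_neg (n : ℕ) :
    IntegrableOn (fun x : ℝ => x ^ n * exp (-x)) (Ioi 0) := by
  refine (GammaIntegral_convergent (s := n + 1) (by positivity)).congr_fun (fun x _ => ?_)
    measurableSet_Ioi
  simp only [add_sub_cancel_right, rpow_natCast, mul_comm]

theorem integral_pow_mul_exp_neg (n : ℕ) : ∫ x in Ioi (0 : ℝ), x ^ n * exp (-x) = n ! := by
  have hGamma := Gamma_eq_integral (s := (n : ℝ) + 1) (by positivity)
  rw [Gamma_nat_eq_factorial] at hGamma
  rw [hGamma]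
  refine setIntegral_congr_fun measurableSet_Ioi fun x _ => ?_
  simp only [add_sub_cancel_right, rpow_natCast, mul_comm]

theorem pow_mul_log_add_one_mul_exp_neg_mem_Icc (n : ℕ) {x : ℝ} (hx : 0 ≤ x) :
    x ^ n * log (x + 1) * exp (-x) ∈ Icc 0 (x ^ (n + 1) * exp (-x)) := by
  have hlog_nonneg : 0 ≤ log (x + 1) := log_nonneg (by linarith)
  have hlog_le : log (x + 1) ≤ x := by linarith [log_le_sub_one_of_pos (x := x + 1) (by linarith)]
  refine ⟨by positivity, ?_⟩
  rw [pow_succ]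
  gcongr

theorem integrableOn_pow_mul_log_add_one_mul_exp_neg (n : ℕ) :
    IntegrableOn (fun x : ℝ => x ^ n * log (x + 1) * exp (-x)) (Ioi 0) := by
  have hcont : ContinuousOn (fun x : ℝ => x ^ n * log (x + 1) * exp (-x)) (Ioi 0) :=
    ((continuousOn_pow n).mul (continuousOn_log.comp (by fun_prop) fun x (hx : 0 < x) => by
      simp only [mem_compl_iff, mem_singleton_iff]; linarith)).mul (by fun_prop)
  refine (integrableOn_pow_mul_exp_neg (n + 1)).mono'
    (hcont.aestronglyMeasurable measurableSet_Ioi) ?_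
  filter_upwards [ae_restrict_mem measurableSet_Ioi] with x (hx : 0 < x)
  have hmem := pow_mul_log_add_one_mul_exp_neg_mem_Icc n hx.le
  rw [norm_of_nonneg hmem.1]
  exact hmem.2

theorem integrableOn_pow_mul_exp_neg_div_add_one (n : ℕ) :
    IntegrableOn (fun x : ℝ => x ^ n * exp (-x) / (x + 1)) (Ioi 0) := by
  have hcont : ContinuousOn (fun x : ℝ => x ^ n * exp (-x) / (x + 1)) (Ioi 0) :=
    ContinuousOn.div (by fun_prop) (by fun_prop) fun x (hx : 0 < x) => by linarith
  refine (integrableOn_pow_mul_exp_neg n).mono' (hcont.aestronglyMeasurable measurableSet_Ioi) ?_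
  filter_upwards [ae_restrict_mem measurableSet_Ioi] with x (hx : 0 < x)
  rw [norm_of_nonneg (by positivity)]
  exact div_le_self (by positivity) (by linarith)

theorem tendsto_pow_mul_log_add_one_mul_exp_neg_atTop (n : ℕ) :
    Tendsto (fun x : ℝ => x ^ n * log (x + 1) * exp (-x)) atTop (nhds 0) := by
  refine squeeze_zero' ?_ ?_ (tendsto_pow_mul_exp_neg_atTop_nhds_zero (n + 1))
  · filter_upwards [eventually_ge_atTop 0] with x hx
    exact (pow_mul_log_add_one_mul_exp_neg_mem_Icc n hx).1
  · filter_upwards [eventually_ge_atTop 0] with x hx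
    exact (pow_mul_log_add_one_mul_exp_neg_mem_Icc n hx).2

theorem hasDerivAt_pow_mul_log_add_one_mul_exp_neg (n : ℕ) {x : ℝ} (hx : -1 < x) :
    HasDerivAt (fun x : ℝ => x ^ n * log (x + 1) * exp (-x))
      (n * (x ^ (n - 1) * log (x + 1) * exp (-x)) - x ^ n * log (x + 1) * exp (-x)
        + x ^ n * exp (-x) / (x + 1)) x := by
  have hlog : HasDerivAt (fun x : ℝ => log (x + 1)) (x + 1)⁻¹ x := by
    simpa using ((hasDerivAt_id' x).add_const 1).log (by linarith)
  have hexp : HasDerivAt (fun x : ℝ => exp (-x)) (-exp (-x)) x := by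
    simpa using (hasDerivAt_neg x).exp
  refine (((hasDerivAt_pow n x).fun_mul hlog).fun_mul hexp).congr_deriv ?_
  ring

theorem integral_pow_mul_log_add_one_mul_exp_neg (n : ℕ) :
    ∫ x in Ioi (0 : ℝ), x ^ n * log (x + 1) * exp (-x) =
      n * (∫ x in Ioi (0 : ℝ), x ^ (n - 1) * log (x + 1) * exp (-x))
        + ∫ x in Ioi (0 : ℝ), x ^ n * exp (-x) / (x + 1) := by
  have hI := integrableOn_pow_mul_log_add_one_mul_exp_neg
  have hJ := integrableOn_pow_mul_exp_neg_div_add_one n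
  have hIpred := (hI (n - 1)).const_mul (n : ℝ)
  have hdiff : IntegrableOn (fun x : ℝ => n * (x ^ (n - 1) * log (x + 1) * exp (-x))
      - x ^ n * log (x + 1) * exp (-x)) (Ioi 0) := hIpred.sub (hI n)
  have hparts := integral_Ioi_of_hasDerivAt_of_tendsto' (a := 0)
    (fun x hx => hasDerivAt_pow_mul_log_add_one_mul_exp_neg n (neg_one_lt_zero.trans_le hx))
    (hdiff.add hJ) (tendsto_pow_mul_log_add_one_mul_exp_neg_atTop n)
  rw [integral_add hdiff hJ, integral_sub hIpred (hI n), integral_const_mul] at hparts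
  simp only [zero_add, log_one, mul_zero, zero_mul, sub_zero] at hparts
  linarith

theorem integral_pow_succ_mul_exp_neg_div_add_one (n : ℕ) :
    ∫ x in Ioi (0 : ℝ), x ^ (n + 1) * exp (-x) / (x + 1) =
      (n ! : ℝ) - ∫ x in Ioi (0 : ℝ), x ^ n * exp (-x) / (x + 1) := by
  have hsplit : ∀ x ∈ Ioi (0 : ℝ),
      x ^ (n + 1) * exp (-x) / (x + 1) = x ^ n * exp (-x) - x ^ n * exp (-x) / (x + 1) := by
    intro x (hx : 0 < x)
    field_simp
    ring
  rw [setIntegral_congr_fun measurableSet_Ioi hsplit,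
    integral_sub (integrableOn_pow_mul_exp_neg n) (integrableOn_pow_mul_exp_neg_div_add_one n),
    integral_pow_mul_exp_neg]

theorem stmt1 (n : ℕ) :
    ∫ x in Set.Ioi (0:ℝ), x ^ n * Real.log (x + 1) * Real.exp (-x) =
      ∑ j ∈ Finset.range (n + 1),
        ((Nat.factorial n : ℝ) / (Nat.factorial j : ℝ)) * (-1 : ℝ) ^ j *
          ((∑ i ∈ Finset.range j, (-1 : ℝ) ^ (i + 1) * (Nat.factorial i : ℝ)) +
            ∫ x in Set.Ioi (0:ℝ), Real.log (x + 1) * Real.exp (-x)) := by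
  set I : ℕ → ℝ := fun n => ∫ x in Ioi (0 : ℝ), x ^ n * log (x + 1) * exp (-x)
  set J : ℕ → ℝ := fun n => ∫ x in Ioi (0 : ℝ), x ^ n * exp (-x) / (x + 1)
  have hI0 : I 0 = J 0 := by simpa [I, J] using integral_pow_mul_log_add_one_mul_exp_neg 0
  have hIsucc (n : ℕ) : I (n + 1) = (n + 1) * I n + J (n + 1) := by
    simpa [I, J] using integral_pow_mul_log_add_one_mul_exp_neg (n + 1)
  have hJ (j : ℕ) : J j = (-1) ^ j * (∑ i ∈ range j, (-1) ^ (i + 1) * (i ! : ℝ) + I 0) := by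
    rw [hI0]
    exact eq_neg_one_pow_mul_of_succ integral_pow_succ_mul_exp_neg_div_add_one j
  have hδ : I 0 = ∫ x in Ioi (0 : ℝ), log (x + 1) * exp (-x) := by simp [I]
  refine (eq_sum_factorial_div_mul_of_succ hI0 hIsucc n).trans ?_
  simp only [hJ, hδ, mul_assoc]
end

section
/- For fixed real ε ∈ (-1,-1/2), fixed u₀ > 0, and any integer n > 0, the quantity m^n · u^{m-1} |f^{(m)}(u)| / ((1+ε) m!) tends to 0 as m → ∞, uniformly for u ∈ (0, u₀], where f(u) = (1/Γ(1+ε)) ∫₀^∞ x^{ε-1} ln(xu+1) e^{-x} dx. -/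
/-!
Differentiating under the integral sign,
`f^(k+1)(u) = Γ(1+ε)⁻¹ ∫ x^(ε-1) (-1)^k k! x^(k+1) (xu+1)^(-(k+1)) e^(-x) dx`, hence
`u^k |f^(k+1)(u)| ≤ k! Γ(1+ε)⁻¹ ∫ x^ε (xu₀/(xu₀+1))^k e^(-x) dx` for `u ≤ u₀`.
As `(y/(y+1))^k ≤ exp(-k/(y+1))` and, by AM-GM in `t = xu₀+1`,
`k/t + x/2 ≥ 2√(k/(2u₀)) - 1/(2u₀)`, this is at most `C k! exp(-2√(k/(2u₀)))`.
Dividing by `m! = (k+1)!` leaves `C' m^n exp(-2√(k/(2u₀)))`, which tends to zero.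
-/

open MeasureTheory Real
open Set Filter Topology
open scoped Nat

noncomputable def logMulAddOneDeriv : ℕ → ℝ → ℝ → ℝ
  | 0, x, v => log (x * v + 1)
  | k + 1, x, v => (-1) ^ k * k ! * x ^ (k + 1) / (x * v + 1) ^ (k + 1)

lemma hasDerivAt_logMulAddOneDeriv (m : ℕ) {x v : ℝ} (hv : 0 < x * v + 1) :
    HasDerivAt (logMulAddOneDeriv m x) (logMulAddOneDeriv (m + 1) x v) v := by
  have hlin : HasDerivAt (fun w : ℝ => x * w + 1) x v := by
    simpa using ((hasDerivAt_id v).const_mul x).add_const 1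
  cases m with
  | zero =>
    refine (hlin.log hv.ne').congr_deriv ?_
    simp only [logMulAddOneDeriv]
    ring
  | succ k =>
    refine ((hasDerivAt_const v ((-1 : ℝ) ^ k * k ! * x ^ (k + 1))).div
      (hlin.fun_pow (k + 1)) (pow_ne_zero _ hv.ne')).congr_deriv ?_
    simp only [logMulAddOneDeriv, Nat.factorial_succ]
    field_simp
    push_cast
    ring

lemma pow_mul_abs_logMulAddOneDeriv_succ (m : ℕ) {x v : ℝ} (hx : 0 ≤ x) (hv : 0 < v) :
    v ^ m * |logMulAddOneDeriv (m + 1) x v| =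
      m ! * (x * v / (x * v + 1)) ^ m * (x / (x * v + 1)) := by
  have : 0 < x * v + 1 := by positivity
  simp only [logMulAddOneDeriv, abs_div, abs_mul, abs_pow, abs_neg, abs_one, one_pow,
    Nat.abs_cast, abs_of_nonneg hx, abs_of_pos this]
  rw [div_pow, mul_pow]
  field_simp
  ring

noncomputable def gammaLogIntegrand (ε : ℝ) (m : ℕ) (v x : ℝ) : ℝ :=
  x ^ (ε - 1) * logMulAddOneDeriv m x v * exp (-x)

lemma pow_mul_abs_gammaLogIntegrand_succ (ε : ℝ) (m : ℕ) {x v : ℝ} (hx : 0 < x)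
    (hv : 0 < v) :
    v ^ m * |gammaLogIntegrand ε (m + 1) v x| =
      m ! * (x * v / (x * v + 1)) ^ m * (x * v + 1)⁻¹ * (x ^ ε * exp (-x)) := by
  have hxε : x ^ ε = x ^ (ε - 1) * x := by rw [← rpow_add_one hx.ne', sub_add_cancel]
  rw [gammaLogIntegrand, abs_mul, abs_mul, abs_of_pos (rpow_pos_of_pos hx _),
    abs_of_pos (exp_pos _), hxε]
  linear_combination x ^ (ε - 1) * exp (-x) * pow_mul_abs_logMulAddOneDeriv_succ m hx.le hv

lemma abs_gammaLogIntegrand_zero_le (ε : ℝ) {x v : ℝ} (hx : 0 < x) (hv : 0 ≤ v) :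
    |gammaLogIntegrand ε 0 v x| ≤ v * (x ^ ε * exp (-x)) := by
  have hxv : 1 ≤ x * v + 1 := by nlinarith
  have hlog : |log (x * v + 1)| ≤ x * v := by
    rw [abs_of_nonneg (log_nonneg hxv)]
    linarith [log_le_sub_one_of_pos (zero_lt_one.trans_le hxv)]
  have hxε : x ^ ε = x ^ (ε - 1) * x := by rw [← rpow_add_one hx.ne', sub_add_cancel]
  rw [gammaLogIntegrand, logMulAddOneDeriv, abs_mul, abs_mul,
    abs_of_pos (rpow_pos_of_pos hx _), abs_of_pos (exp_pos _), hxε]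
  calc x ^ (ε - 1) * |log (x * v + 1)| * exp (-x)
      ≤ x ^ (ε - 1) * (x * v) * exp (-x) := by gcongr
    _ = v * (x ^ (ε - 1) * x * exp (-x)) := by ring

lemma abs_gammaLogIntegrand_succ_le (ε : ℝ) (m : ℕ) {x v w : ℝ} (hx : 0 < x) (hw : 0 < w)
    (hwv : w ≤ v) :
    |gammaLogIntegrand ε (m + 1) v x| ≤ m ! / w ^ m * (x ^ ε * exp (-x)) := by
  have hv : 0 < v := hw.trans_le hwv
  have hxv : 0 < x * v + 1 := by positivity
  have hratio : (x * v / (x * v + 1)) ^ m ≤ 1 :=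
    pow_le_one₀ (by positivity) ((div_le_one hxv).2 (by linarith))
  have hinv : (x * v + 1)⁻¹ ≤ 1 := inv_le_one_of_one_le₀ (by nlinarith)
  rw [div_mul_eq_mul_div, le_div_iff₀ (by positivity), mul_comm]
  calc w ^ m * |gammaLogIntegrand ε (m + 1) v x|
      ≤ v ^ m * |gammaLogIntegrand ε (m + 1) v x| := by gcongr
    _ = m ! * (x * v / (x * v + 1)) ^ m * (x * v + 1)⁻¹ * (x ^ ε * exp (-x)) :=
      pow_mul_abs_gammaLogIntegrand_succ ε m hx hv
    _ ≤ m ! * 1 * 1 * (x ^ ε * exp (-x)) := by gcongr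
    _ = m ! * (x ^ ε * exp (-x)) := by ring

lemma integrableOn_rpow_mul_exp_neg_mul {s b : ℝ} (hs : -1 < s) (hb : 0 < b) :
    IntegrableOn (fun x : ℝ => x ^ s * exp (-(b * x))) (Ioi 0) := by
  simpa using integrableOn_rpow_mul_exp_neg_mul_rpow hs one_pos hb

lemma integrableOn_rpow_mul_exp_neg {s : ℝ} (hs : -1 < s) :
    IntegrableOn (fun x : ℝ => x ^ s * exp (-x)) (Ioi 0) := by
  simpa using integrableOn_rpow_mul_exp_neg_mul hs one_pos

lemma measurable_gammaLogIntegrand (ε : ℝ) (m : ℕ) (v : ℝ) :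
    Measurable (gammaLogIntegrand ε m v) := by
  unfold gammaLogIntegrand
  cases m <;> simp only [logMulAddOneDeriv] <;> fun_prop

lemma integrableOn_gammaLogIntegrand {ε : ℝ} (hε : -1 < ε) (m : ℕ) {v : ℝ} (hv : 0 < v) :
    IntegrableOn (gammaLogIntegrand ε m v) (Ioi 0) := by
  have hmeas : AEStronglyMeasurable (gammaLogIntegrand ε m v) (volume.restrict (Ioi 0)) :=
    (measurable_gammaLogIntegrand ε m v).aestronglyMeasurable
  cases m with
  | zero =>
    refine ((integrableOn_rpow_mul_exp_neg hε).const_mul v).mono' hmeas ?_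
    filter_upwards [ae_restrict_mem measurableSet_Ioi] with x hx
    exact abs_gammaLogIntegrand_zero_le ε hx hv.le
  | succ k =>
    refine ((integrableOn_rpow_mul_exp_neg hε).const_mul (k ! / v ^ k)).mono' hmeas ?_
    filter_upwards [ae_restrict_mem measurableSet_Ioi] with x hx
    exact abs_gammaLogIntegrand_succ_le ε k hx hv le_rfl

lemma hasDerivAt_integral_gammaLogIntegrand {ε : ℝ} (hε : -1 < ε) (m : ℕ) {u : ℝ}
    (hu : 0 < u) :
    HasDerivAt (fun v => ∫ x in Ioi 0, gammaLogIntegrand ε m v x)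
      (∫ x in Ioi 0, gammaLogIntegrand ε (m + 1) u x) u := by
  have hu2 : 0 < u / 2 := half_pos hu
  refine (hasDerivAt_integral_of_dominated_loc_of_deriv_le (Ioi_mem_nhds (half_lt_self hu))
    (.of_forall fun v => (measurable_gammaLogIntegrand ε m v).aestronglyMeasurable)
    (integrableOn_gammaLogIntegrand hε m hu)
    (measurable_gammaLogIntegrand ε (m + 1) u).aestronglyMeasurable ?_
    ((integrableOn_rpow_mul_exp_neg hε).const_mul (m ! / (u / 2) ^ m)) ?_).2
  · filter_upwards [ae_restrict_mem measurableSet_Ioi] with x hx v hv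
    exact abs_gammaLogIntegrand_succ_le ε m hx hu2 (le_of_lt hv)
  · filter_upwards [ae_restrict_mem measurableSet_Ioi] with x (hx : 0 < x) v (hv : u / 2 < v)
    have hxv : 0 < x * v + 1 := by have := hu2.trans hv; positivity
    exact ((hasDerivAt_logMulAddOneDeriv m hxv).const_mul _).mul_const _

noncomputable def gammaLogTransform (ε v : ℝ) : ℝ :=
  (1 / Gamma (1 + ε)) * ∫ x in Ioi 0, x ^ (ε - 1) * log (x * v + 1) * exp (-x)

lemma iteratedDeriv_gammaLogTransform {ε : ℝ} (hε : -1 < ε) (m : ℕ) {u : ℝ} (hu : 0 < u) :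
    iteratedDeriv m (gammaLogTransform ε) u =
      (1 / Gamma (1 + ε)) * ∫ x in Ioi 0, gammaLogIntegrand ε m u x := by
  induction m generalizing u with
  | zero => rfl
  | succ m ih =>
    rw [iteratedDeriv_succ, (eventuallyEq_of_mem (Ioi_mem_nhds hu) fun v hv => ih hv).deriv_eq]
    exact ((hasDerivAt_integral_gammaLogIntegrand hε m hu).const_mul _).deriv

lemma two_mul_sqrt_mul_le_div_add_mul {a c t : ℝ} (ha : 0 ≤ a) (hc : 0 ≤ c) (ht : 0 < t) :
    2 * √(c * a) ≤ a / t + c * t := by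
  have hat : 0 ≤ a / t := by positivity
  calc 2 * √(c * a) = 2 * √(a / t) * √(c * t) := by
        rw [mul_assoc, ← sqrt_mul hat]
        congr 2
        field_simp
    _ ≤ √(a / t) ^ 2 + √(c * t) ^ 2 := two_mul_le_add_sq _ _
    _ = a / t + c * t := by rw [sq_sqrt hat, sq_sqrt (by positivity)]

lemma div_add_one_pow_le_exp_neg (k : ℕ) {y : ℝ} (hy : 0 ≤ y) :
    (y / (y + 1)) ^ k ≤ exp (-(k / (y + 1))) := by
  have hsub : y / (y + 1) = 1 - 1 / (y + 1) := by field_simp; ring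
  calc (y / (y + 1)) ^ k ≤ exp (-(1 / (y + 1))) ^ k := by
        gcongr
        rw [hsub]
        exact one_sub_le_exp_neg _
    _ = exp (-(k / (y + 1))) := by rw [← exp_nat_mul]; ring_nf

lemma pow_mul_abs_gammaLogIntegrand_succ_le_exp (ε : ℝ) (k : ℕ) {x u u₀ : ℝ} (hx : 0 < x)
    (hu : 0 < u) (huu₀ : u ≤ u₀) :
    u ^ k * |gammaLogIntegrand ε (k + 1) u x| ≤
      exp (1 / (2 * u₀)) * (k ! * exp (-(2 * √(1 / (2 * u₀) * k)))) *
        (x ^ ε * exp (-(1 / 2 * x))) := by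
  have hu₀ : 0 < u₀ := hu.trans_le huu₀
  have hxu : 0 < x * u := by positivity
  have hratio : x * u / (x * u + 1) ≤ x * u₀ / (x * u₀ + 1) := by
    rw [div_le_div_iff₀ (by positivity) (by positivity)]
    nlinarith
  have hinv : (x * u + 1)⁻¹ ≤ 1 := inv_le_one_of_one_le₀ (by linarith)
  have hpow : (x * u / (x * u + 1)) ^ k ≤ exp (-(k / (x * u₀ + 1))) :=
    (pow_le_pow_left₀ (by positivity) hratio k).trans
      (div_add_one_pow_le_exp_neg k (by positivity))
  have hexp : exp (-(k / (x * u₀ + 1))) * exp (-x) ≤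
      exp (1 / (2 * u₀)) * exp (-(2 * √(1 / (2 * u₀) * k))) * exp (-(1 / 2 * x)) := by
    have := two_mul_sqrt_mul_le_div_add_mul (Nat.cast_nonneg k)
      (by positivity : 0 ≤ 1 / (2 * u₀)) (by positivity : 0 < x * u₀ + 1)
    have hct : 1 / (2 * u₀) * (x * u₀ + 1) = 1 / 2 * x + 1 / (2 * u₀) := by field_simp
    rw [← exp_add, ← exp_add, ← exp_add, exp_le_exp]
    linarith
  rw [pow_mul_abs_gammaLogIntegrand_succ ε k hx hu]
  calc k ! * (x * u / (x * u + 1)) ^ k * (x * u + 1)⁻¹ * (x ^ ε * exp (-x))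
      ≤ k ! * exp (-(k / (x * u₀ + 1))) * 1 * (x ^ ε * exp (-x)) := by gcongr
    _ = k ! * x ^ ε * (exp (-(k / (x * u₀ + 1))) * exp (-x)) := by ring
    _ ≤ k ! * x ^ ε * (exp (1 / (2 * u₀)) * exp (-(2 * √(1 / (2 * u₀) * k))) *
          exp (-(1 / 2 * x))) := by gcongr
    _ = _ := by ring

lemma pow_mul_abs_iteratedDeriv_gammaLogTransform_le {ε : ℝ} (hε : -1 < ε) (k : ℕ)
    {u u₀ : ℝ} (hu : 0 < u) (huu₀ : u ≤ u₀) :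
    u ^ k * |iteratedDeriv (k + 1) (gammaLogTransform ε) u| ≤
      (Gamma (1 + ε))⁻¹ * exp (1 / (2 * u₀)) * (∫ x in Ioi 0, x ^ ε * exp (-(1 / 2 * x))) *
        (k ! * exp (-(2 * √(1 / (2 * u₀) * k)))) := by
  have hΓ : 0 < Gamma (1 + ε) := Gamma_pos_of_pos (by linarith)
  have hint := integrableOn_gammaLogIntegrand hε (k + 1) hu
  rw [iteratedDeriv_gammaLogTransform hε (k + 1) hu]
  calc u ^ k * |1 / Gamma (1 + ε) * ∫ x in Ioi 0, gammaLogIntegrand ε (k + 1) u x|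
      = (Gamma (1 + ε))⁻¹ * (u ^ k * |∫ x in Ioi 0, gammaLogIntegrand ε (k + 1) u x|) := by
        rw [abs_mul, abs_of_pos (by positivity)]
        ring
    _ ≤ (Gamma (1 + ε))⁻¹ * ∫ x in Ioi 0, u ^ k * |gammaLogIntegrand ε (k + 1) u x| := by
        rw [integral_const_mul]
        gcongr
        exact abs_integral_le_integral_abs
    _ ≤ (Gamma (1 + ε))⁻¹ * ∫ x in Ioi 0,
          exp (1 / (2 * u₀)) * (k ! * exp (-(2 * √(1 / (2 * u₀) * k)))) *
            (x ^ ε * exp (-(1 / 2 * x))) := by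
        gcongr _ * ?_
        exact setIntegral_mono_on (hint.abs.const_mul _)
          ((integrableOn_rpow_mul_exp_neg_mul hε one_half_pos).const_mul _) measurableSet_Ioi
          fun x hx => pow_mul_abs_gammaLogIntegrand_succ_le_exp ε k hx hu huu₀
    _ = _ := by rw [integral_const_mul]; ring

lemma tendsto_pow_mul_exp_neg_two_mul_sqrt (j : ℕ) {c : ℝ} (hc : 0 < c) :
    Tendsto (fun k : ℕ => ((k : ℝ) + 1) ^ j * exp (-(2 * √(c * k)))) atTop (𝓝 0) := by
  have hlim := ((tendsto_rpow_mul_exp_neg_mul_atTop_nhds_zero ((2 * j : ℕ) : ℝ) (2 * √c)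
    (by positivity)).comp (tendsto_sqrt_atTop.comp tendsto_natCast_atTop_atTop)).const_mul (2 ^ j)
  rw [mul_zero] at hlim
  refine squeeze_zero' (.of_forall fun k => by positivity) ?_ hlim
  filter_upwards [eventually_ge_atTop 1] with k hk
  have hk1 : (1 : ℝ) ≤ k := by exact_mod_cast hk
  have hsqrt : √(k : ℝ) ^ ((2 * j : ℕ) : ℝ) = (k : ℝ) ^ j := by
    rw [rpow_natCast, pow_mul, sq_sqrt (by positivity)]
  simp only [Function.comp_apply, hsqrt, sqrt_mul hc.le]
  calc ((k : ℝ) + 1) ^ j * exp (-(2 * (√c * √k)))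
      ≤ (2 * k) ^ j * exp (-(2 * (√c * √k))) := by gcongr; linarith
    _ = 2 ^ j * (k ^ j * exp (-(2 * √c) * √k)) := by ring_nf

theorem stmt8_general (ε : ℝ) (hε : ε ∈ Set.Ioo (-1 : ℝ) (-1/2)) (u₀ : ℝ) (hu₀ : 0 < u₀)
    (n : ℕ) :
    ∀ δ > (0 : ℝ), ∃ M : ℕ, ∀ m ≥ M, ∀ u ∈ Set.Ioc (0 : ℝ) u₀,
      (m : ℝ) ^ n * u ^ (m - 1) *
          |iteratedDeriv m
              (fun v : ℝ =>
                (1 / Real.Gamma (1 + ε)) *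
                  ∫ x in Set.Ioi (0:ℝ), x ^ (ε - 1) * Real.log (x * v + 1) * Real.exp (-x))
              u| /
        ((1 + ε) * (Nat.factorial m : ℝ)) < δ := by
  intro δ hδ
  have hε₁ : 0 < 1 + ε := by linarith [hε.1]
  set C :=
    (Gamma (1 + ε))⁻¹ * exp (1 / (2 * u₀)) * ∫ x in Ioi 0, x ^ ε * exp (-(1 / 2 * x))
  have hC : 0 ≤ C := by
    have := Gamma_pos_of_pos hε₁
    have : 0 ≤ ∫ x in Ioi (0 : ℝ), x ^ ε * exp (-(1 / 2 * x)) :=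
      setIntegral_nonneg measurableSet_Ioi fun x (hx : 0 < x) => by positivity
    positivity
  obtain ⟨M, hM⟩ := eventually_atTop.mp
    (((tendsto_pow_mul_exp_neg_two_mul_sqrt n (by positivity : 0 < 1 / (2 * u₀))).const_mul
      (C / (1 + ε))).eventually_lt_const (show C / (1 + ε) * 0 < δ by rwa [mul_zero]))
  refine ⟨M + 1, fun m hm u ⟨hu, huu₀⟩ => ?_⟩
  obtain ⟨k, rfl⟩ : ∃ k, m = k + 1 := ⟨m - 1, by omega⟩
  refine lt_of_le_of_lt ?_ (hM k (by omega))
  change _ * |iteratedDeriv _ (gammaLogTransform ε) u| / _ ≤ _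
  have hfac : (k ! : ℝ) ≤ (k + 1)! := by exact_mod_cast Nat.factorial_le k.le_succ
  calc ((k + 1 : ℕ) : ℝ) ^ n * u ^ (k + 1 - 1) *
          |iteratedDeriv (k + 1) (gammaLogTransform ε) u| / ((1 + ε) * (k + 1)!)
      = ((k : ℝ) + 1) ^ n * (u ^ k * |iteratedDeriv (k + 1) (gammaLogTransform ε) u|) /
          ((1 + ε) * (k + 1)!) := by push_cast; ring_nf
    _ ≤ ((k : ℝ) + 1) ^ n * (C * ((k + 1)! * exp (-(2 * √(1 / (2 * u₀) * k))))) /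
          ((1 + ε) * (k + 1)!) := by
        gcongr _ * ?_ / _
        exact (pow_mul_abs_iteratedDeriv_gammaLogTransform_le hε.1 k hu huu₀).trans (by gcongr)
    _ = C / (1 + ε) * (((k : ℝ) + 1) ^ n * exp (-(2 * √(1 / (2 * u₀) * k)))) := by
        field_simp

theorem stmt8 (ε : ℝ) (hε : ε ∈ Set.Ioo (-1 : ℝ) (-1/2)) (u₀ : ℝ) (hu₀ : 0 < u₀)
    (n : ℕ) (hn : 0 < n) :
    ∀ δ > (0 : ℝ), ∃ M : ℕ, ∀ m ≥ M, ∀ u ∈ Set.Ioc (0 : ℝ) u₀,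
      (m : ℝ) ^ n * u ^ (m - 1) *
          |iteratedDeriv m
              (fun v : ℝ =>
                (1 / Real.Gamma (1 + ε)) *
                  ∫ x in Set.Ioi (0:ℝ), x ^ (ε - 1) * Real.log (x * v + 1) * Real.exp (-x))
              u| /
        ((1 + ε) * (Nat.factorial m : ℝ)) < δ :=
  stmt8_general ε hε u₀ hu₀ n
end
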